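/- arXiv:2301.00346 — 2 statements merged into one kernel-verified Lean document; each statement's English description precedes it below -/
import Mathlib

section
/- For all real u and v, σ(u) · log(σ(u)/σ(v)) ≤ |u - v|, where σ(x) = 1/(1+e^{-x}) is the logistic sigmoid. -/
/-- The logistic sigmoid function. -/
noncomputable def sigmoid (x : ℝ) : ℝ := 1 / (1 + Real.exp (-x))

lemma softplus_lip (a b : ℝ) (h : a ≤ b) :
    Real.log (1 + Real.exp b) - Real.log (1 + Real.exp a) ≤ b - a := by
  have ha : (0:ℝ) < 1 + Real.exp a := by positivity
  have hb : (0:ℝ) < 1 + Real.exp b := by positivity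
  rw [← Real.log_div hb.ne' ha.ne']
  calc Real.log ((1 + Real.exp b) / (1 + Real.exp a))
      ≤ Real.log (Real.exp (b - a)) := by
        apply Real.log_le_log (by positivity)
        rw [div_le_iff₀ ha]
        have h1 : Real.exp (b - a) * (1 + Real.exp a)
            = Real.exp (b - a) + Real.exp b := by
          rw [mul_add, ← Real.exp_add]; ring_nf
        rw [h1]
        have h2 : (1:ℝ) ≤ Real.exp (b - a) := Real.one_le_exp (by linarith)
        linarith
    _ = b - a := Real.log_exp _

lemma log_sigmoid (x : ℝ) :
    Real.log (sigmoid x) = -Real.log (1 + Real.exp (-x)) := by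
  have hx : (0:ℝ) < 1 + Real.exp (-x) := by positivity
  unfold sigmoid
  rw [Real.log_div one_ne_zero hx.ne', Real.log_one, zero_sub]

/-- For all real `u`, `v`: `σ(u) · log(σ(u)/σ(v)) ≤ |u - v|`. -/
theorem sigmoid_mul_log_ratio_le_abs_diff :
    ∀ u v : ℝ, sigmoid u * Real.log (sigmoid u / sigmoid v) ≤ |u - v| := by
  intro u v
  have hu : (0:ℝ) < 1 + Real.exp (-u) := by positivity
  have hv : (0:ℝ) < 1 + Real.exp (-v) := by positivity
  have hσu : 0 < sigmoid u := by unfold sigmoid; positivity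
  have hσv : 0 < sigmoid v := by unfold sigmoid; positivity
  have hσu1 : sigmoid u ≤ 1 := by
    unfold sigmoid
    rw [div_le_one hu]
    have := Real.exp_pos (-u)
    linarith
  set L := Real.log (1 + Real.exp (-v)) - Real.log (1 + Real.exp (-u)) with hL
  have hlog : Real.log (sigmoid u / sigmoid v) = L := by
    rw [Real.log_div hσu.ne' hσv.ne', log_sigmoid, log_sigmoid, hL]; ring
  have hLle : L ≤ |u - v| := by
    rcases le_total u v with h | h
    · have hm : Real.log (1 + Real.exp (-v)) ≤ Real.log (1 + Real.exp (-u)) := by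
        apply Real.log_le_log hv
        have := Real.exp_le_exp.mpr (neg_le_neg h)
        linarith
      have : L ≤ 0 := by rw [hL]; linarith
      linarith [abs_nonneg (u - v)]
    · have := softplus_lip (-u) (-v) (by linarith)
      have habs : u - v ≤ |u - v| := le_abs_self _
      rw [hL]; linarith
  rw [hlog]
  rcases le_or_gt 0 L with h | h
  · calc sigmoid u * L ≤ 1 * L := mul_le_mul_of_nonneg_right hσu1 h
      _ = L := one_mul L
      _ ≤ |u - v| := hLle
  · have : sigmoid u * L < 0 := mul_neg_of_pos_of_neg hσu h
    linarith [abs_nonneg (u - v)]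
end

section
/- The KL divergence between two Bernoulli distributions with success probabilities σ(u) and σ(v), where σ is the logistic sigmoid, satisfies KL(Bern(σ(u)) ‖ Bern(σ(v))) ≤ 2|u - v|. -/
/-- KL divergence between Bernoulli distributions with success probabilities `p` and `q`. -/
noncomputable def klBern (p q : ℝ) : ℝ :=
  p * Real.log (p / q) + (1 - p) * Real.log ((1 - p) / (1 - q))

lemma sigmoid_pos (x : ℝ) : 0 < sigmoid x := by
  unfold sigmoid; positivity

lemma one_sub_sigmoid (x : ℝ) : 1 - sigmoid x = sigmoid (-x) := by
  unfold sigmoid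
  rw [neg_neg]
  have h1 : (0:ℝ) < 1 + Real.exp (-x) := by positivity
  have h2 : (0:ℝ) < 1 + Real.exp x := by positivity
  have key : Real.exp (-x) * Real.exp x = 1 := by rw [← Real.exp_add]; simp
  field_simp
  nlinarith

lemma log_aux (a b : ℝ) :
    Real.log (1 + Real.exp (-b)) - Real.log (1 + Real.exp (-a)) ≤ |a - b| := by
  have h1 : (0:ℝ) < 1 + Real.exp (-a) := by positivity
  have h2 : (0:ℝ) < 1 + Real.exp (-b) := by positivity
  have hle : (1:ℝ) + Real.exp (-b) ≤ Real.exp (|a - b|) * (1 + Real.exp (-a)) := by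
    rw [mul_add, mul_one, ← Real.exp_add]
    have e1 : (1:ℝ) ≤ Real.exp (|a - b|) := Real.one_le_exp (abs_nonneg _)
    have e2 : Real.exp (-b) ≤ Real.exp (|a - b| + -a) := by
      apply Real.exp_le_exp.mpr
      have := le_abs_self (a - b)
      linarith
    linarith
  have := Real.log_le_log h2 hle
  rw [Real.log_mul (Real.exp_pos _).ne' h1.ne', Real.log_exp] at this
  linarith

lemma log_sigmoid_ratio_le (x y : ℝ) :
    Real.log (sigmoid x / sigmoid y) ≤ |x - y| := by
  rw [Real.log_div (sigmoid_pos x).ne' (sigmoid_pos y).ne']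
  unfold sigmoid
  rw [one_div, one_div, Real.log_inv, Real.log_inv]
  have := log_aux x y
  linarith

/-- `KL(Bern(σ(u)) ‖ Bern(σ(v))) ≤ 2 |u - v|`. -/
theorem klBern_sigmoid_le :
    ∀ u v : ℝ, klBern (sigmoid u) (sigmoid v) ≤ 2 * |u - v| := by
  intro u v
  unfold klBern
  rw [one_sub_sigmoid u, one_sub_sigmoid v]
  have hu := sigmoid_pos u
  have hu' := sigmoid_pos (-u)
  have hsum : sigmoid u + sigmoid (-u) = 1 := by
    have := one_sub_sigmoid u; linarith
  have h1 := log_sigmoid_ratio_le u v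
  have h2 := log_sigmoid_ratio_le (-u) (-v)
  have habs : |(-u) - (-v)| = |u - v| := by
    rw [← abs_neg]; ring_nf
  rw [habs] at h2
  nlinarith [mul_le_mul_of_nonneg_left h1 hu.le,
    mul_le_mul_of_nonneg_left h2 hu'.le, abs_nonneg (u - v)]
end
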